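/- arXiv:2409.19200 — 5 statements merged into one kernel-verified Lean document; each statement's English description precedes it below -/
import Mathlib

section
/- Let p ≥ 2, let f : ℝ^d → ℝ be differentiable and L-smooth w.r.t. ‖·‖_p, let y ∈ ℝ^d, and let x⁺ be a minimizer over x ∈ ℝ^d of the map x ↦ ⟨∇f(y), x − y⟩ + L‖x − y‖_p². Then ⟨∇f(x⁺), y − x⁺⟩ ≥ L‖x⁺ − y‖_p². -/
open scoped BigOperators
open scoped InnerProductSpace

/-!
Restricting the objective to the line through `y` and `x⁺` gives the scalar quadratic
`s ↦ s ⟪∇f(y), x⁺ - y⟫ + s² L ‖x⁺ - y‖_p²`, minimized at `s = 1`; its vanishing derivative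
there yields `⟪∇f(y), x⁺ - y⟫ = -2L ‖x⁺ - y‖_p²`. Hölder's inequality and smoothness bound the
remaining term `⟪∇f(x⁺) - ∇f(y), x⁺ - y⟫` by `L ‖x⁺ - y‖_p²`.
-/

/-- The `ℓ_p` "norm" on `ℝ^d` for a real exponent `p`. -/
noncomputable def pnorm (p : ℝ) {d : ℕ} (x : EuclideanSpace ℝ (Fin d)) : ℝ :=
  (∑ i, |x i| ^ p) ^ (1 / p)

/-- The dual exponent `p* = p/(p-1)`, so that `1/p + 1/p* = 1`. -/
noncomputable def dualExp (p : ℝ) : ℝ := p / (p - 1)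

lemma pnorm_nonneg (p : ℝ) {d : ℕ} (x : EuclideanSpace ℝ (Fin d)) : 0 ≤ pnorm p x :=
  Real.rpow_nonneg (Finset.sum_nonneg fun _ _ => Real.rpow_nonneg (abs_nonneg _) _) _

lemma pnorm_smul {p : ℝ} (hp : 0 < p) {d : ℕ} (s : ℝ) (x : EuclideanSpace ℝ (Fin d)) :
    pnorm p (s • x) = |s| * pnorm p x := by
  have hcoord : ∀ i, |(s • x) i| ^ p = |s| ^ p * |x i| ^ p := fun i => by
    rw [PiLp.smul_apply, smul_eq_mul, abs_mul, Real.mul_rpow (abs_nonneg _) (abs_nonneg _)]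
  simp only [pnorm, hcoord, ← Finset.mul_sum]
  rw [Real.mul_rpow (Real.rpow_nonneg (abs_nonneg _) _)
    (Finset.sum_nonneg fun _ _ => Real.rpow_nonneg (abs_nonneg _) _),
    ← Real.rpow_mul (abs_nonneg _), mul_one_div, div_self hp.ne', Real.rpow_one]

lemma inner_le_pnorm_dualExp_mul_pnorm {p : ℝ} (hp : 1 < p) {d : ℕ}
    (v u : EuclideanSpace ℝ (Fin d)) : ⟪v, u⟫_ℝ ≤ pnorm (dualExp p) v * pnorm p u := by
  have hpq : Real.HolderConjugate (dualExp p) p := (Real.HolderConjugate.conjExponent hp).symm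
  have hinner : ⟪v, u⟫_ℝ = ∑ i, v i * u i := by
    simp [PiLp.inner_apply, RCLike.inner_apply, mul_comm]
  rw [hinner]
  exact Real.inner_le_Lp_mul_Lq Finset.univ (fun i => v i) (fun i => u i) hpq

lemma eq_neg_two_mul_of_forall_add_le {a c : ℝ} (h : ∀ s : ℝ, a + c ≤ a * s + c * s ^ 2) :
    a = -2 * c := by
  have hmin : IsLocalMin (fun s : ℝ => a * s + c * s ^ 2) 1 :=
    Filter.Eventually.of_forall fun s => by simpa using h s
  have hderiv : HasDerivAt (fun s : ℝ => a * s + c * s ^ 2) (a + c * 2) 1 := by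
    have h := ((hasDerivAt_id' (1 : ℝ)).const_mul a).add ((hasDerivAt_pow 2 (1 : ℝ)).const_mul c)
    norm_num at h
    exact h
  linarith [hmin.hasDerivAt_eq_zero hderiv]

lemma inner_eq_neg_two_mul_of_isMin_pnorm {p : ℝ} (hp : 0 < p) {d : ℕ} (L : ℝ)
    (g y xp : EuclideanSpace ℝ (Fin d))
    (hxp : ∀ x : EuclideanSpace ℝ (Fin d),
      ⟪g, xp - y⟫_ℝ + L * pnorm p (xp - y) ^ 2 ≤ ⟪g, x - y⟫_ℝ + L * pnorm p (x - y) ^ 2) :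
    ⟪g, xp - y⟫_ℝ = -2 * (L * pnorm p (xp - y) ^ 2) := by
  refine eq_neg_two_mul_of_forall_add_le fun s => ?_
  have hline := hxp (y + s • (xp - y))
  rwa [add_sub_cancel_left, pnorm_smul hp, real_inner_smul_right, mul_pow, sq_abs,
    mul_comm s, mul_left_comm L, mul_comm (s ^ 2)] at hline

theorem stmt1_general {d : ℕ} (p L : ℝ) (hp : 2 ≤ p)
    (f : EuclideanSpace ℝ (Fin d) → ℝ)
    (hsmooth : ∀ x y : EuclideanSpace ℝ (Fin d),
      pnorm (dualExp p) (gradient f y - gradient f x) ≤ L * pnorm p (y - x))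
    (y xp : EuclideanSpace ℝ (Fin d))
    (hxp : ∀ x : EuclideanSpace ℝ (Fin d),
      ⟪gradient f y, xp - y⟫_ℝ + L * pnorm p (xp - y) ^ 2 ≤
      ⟪gradient f y, x - y⟫_ℝ + L * pnorm p (x - y) ^ 2) :
    ⟪gradient f xp, y - xp⟫_ℝ ≥ L * pnorm p (xp - y) ^ 2 := by
  have hstationary := inner_eq_neg_two_mul_of_isMin_pnorm (by linarith) L _ y xp hxp
  have hcross : ⟪gradient f xp - gradient f y, xp - y⟫_ℝ ≤ L * pnorm p (xp - y) ^ 2 :=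
    calc ⟪gradient f xp - gradient f y, xp - y⟫_ℝ
        ≤ pnorm (dualExp p) (gradient f xp - gradient f y) * pnorm p (xp - y) :=
          inner_le_pnorm_dualExp_mul_pnorm (by linarith) _ _
      _ ≤ L * pnorm p (xp - y) * pnorm p (xp - y) :=
          mul_le_mul_of_nonneg_right (hsmooth y xp) (pnorm_nonneg p _)
      _ = L * pnorm p (xp - y) ^ 2 := by ring
  have hsplit : ⟪gradient f xp, y - xp⟫_ℝ =
      -⟪gradient f xp - gradient f y, xp - y⟫_ℝ - ⟪gradient f y, xp - y⟫_ℝ := by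
    rw [← neg_sub xp y, inner_neg_right, inner_sub_left]
    ring
  rw [hsplit]
  linarith

theorem stmt1 {d : ℕ} (p L : ℝ) (hp : 2 ≤ p) (hL : 0 < L)
    (f : EuclideanSpace ℝ (Fin d) → ℝ) (hf : Differentiable ℝ f)
    (hsmooth : ∀ x y : EuclideanSpace ℝ (Fin d),
      pnorm (dualExp p) (gradient f y - gradient f x) ≤ L * pnorm p (y - x))
    (y xp : EuclideanSpace ℝ (Fin d))
    (hxp : ∀ x : EuclideanSpace ℝ (Fin d),
      ⟪gradient f y, xp - y⟫_ℝ + L * pnorm p (xp - y) ^ 2 ≤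
      ⟪gradient f y, x - y⟫_ℝ + L * pnorm p (x - y) ^ 2) :
    ⟪gradient f xp, y - xp⟫_ℝ ≥ L * pnorm p (xp - y) ^ 2 :=
  stmt1_general p L hp f hsmooth y xp hxp
end

section
/- Let p ≥ 2 and let f : ℝ^d → ℝ be convex, differentiable, and L-smooth w.r.t. ‖·‖_p, and let (x_t), (y_t), (v_t), (a_t), (A_t), (ρ_t), (ψ_t) be HASD iterates started at x_0 ∈ ℝ^d. Then for every t ≥ 0, A_t^{1/2} ≥ (1/(18 L^{1/2})) ∑_{i=0}^{t-1} ‖∇f(x_{i+1})‖_{p*} / ‖∇f(x_{i+1})‖_2. -/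
open scoped BigOperators
open scoped InnerProductSpace

/-- The iterates of the Hyper-Accelerated Steepest Descent (HASD) method for
`f : ℝ^d → ℝ` differentiable, smoothness constant `L > 0`, started at `x0`. -/
structure HASD (d : ℕ) (p L : ℝ) (f : EuclideanSpace ℝ (Fin d) → ℝ)
    (x0 : EuclideanSpace ℝ (Fin d)) where
  x : ℕ → EuclideanSpace ℝ (Fin d)
  y : ℕ → EuclideanSpace ℝ (Fin d)
  v : ℕ → EuclideanSpace ℝ (Fin d)
  a : ℕ → ℝ
  A : ℕ → ℝ
  ρ : ℕ → ℝ
  ψ : ℕ → EuclideanSpace ℝ (Fin d) → ℝ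
  x_zero : x 0 = x0
  A_zero : A 0 = 0
  ψ_zero : ∀ z, ψ 0 z = (1 / 2) * pnorm 2 (z - x0) ^ 2
  /-- `v t` minimizes `ψ t` over `ℝ^d`. -/
  v_min : ∀ t z, ψ t (v t) ≤ ψ t z
  grad_ne : ∀ t : ℕ, gradient f (x (t + 1)) ≠ 0
  ρ_pos : ∀ t : ℕ, 0 < ρ t
  ρ_lb : ∀ t : ℕ, (1 / 2) * (pnorm 2 (gradient f (x (t + 1))) ^ 2 /
      pnorm (dualExp p) (gradient f (x (t + 1))) ^ 2) ≤ ρ t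
  ρ_ub : ∀ t : ℕ, ρ t ≤ 2 * (pnorm 2 (gradient f (x (t + 1))) ^ 2 /
      pnorm (dualExp p) (gradient f (x (t + 1))) ^ 2)
  a_pos : ∀ t : ℕ, 0 < a (t + 1)
  a_eq : ∀ t : ℕ, a (t + 1) ^ 2 = (A t + a (t + 1)) / (18 * L * ρ t)
  A_succ : ∀ t : ℕ, A (t + 1) = A t + a (t + 1)
  y_def : ∀ t : ℕ, y t = (1 - a (t + 1) / A (t + 1)) • x t + (a (t + 1) / A (t + 1)) • v t
  /-- `x (t+1)` minimizes `z ↦ ⟪∇f(y t), z - y t⟫ + L ‖z - y t‖_p²` over `ℝ^d`. -/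
  x_min : ∀ (t : ℕ) (z : EuclideanSpace ℝ (Fin d)),
      ⟪gradient f (y t), x (t + 1) - y t⟫_ℝ + L * pnorm p (x (t + 1) - y t) ^ 2 ≤
      ⟪gradient f (y t), z - y t⟫_ℝ + L * pnorm p (z - y t) ^ 2
  ψ_succ : ∀ (t : ℕ) (z : EuclideanSpace ℝ (Fin d)),
      ψ (t + 1) z = ψ t z + a (t + 1) * (f (x (t + 1)) + ⟪gradient f (x (t + 1)), z - x (t + 1)⟫_ℝ)

/-!
Write `c_t = 18 L ρ_t`. The step-size rule `a_{t+1}² = A_{t+1} / c_t` gives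
`√A_{t+1} = a_{t+1} √c_t`, and since
`a_{t+1} = (√A_{t+1} - √A_t)(√A_{t+1} + √A_t) ≤ 2 √A_{t+1} (√A_{t+1} - √A_t)`,
each step increases `√A` by at least `1 / (2 √c_t)`. The upper bound on `ρ_t` turns this into
`‖∇f(x_{t+1})‖_{p*} / (18 √L ‖∇f(x_{t+1})‖_2)`, and the claim follows by telescoping.
-/

theorem one_div_two_sqrt_le_sqrt_add_sub_sqrt {A a c : ℝ} (hA : 0 ≤ A) (ha : 0 < a) (hc : 0 < c)
    (h : a ^ 2 = (A + a) / c) : 1 / (2 * √c) ≤ √(A + a) - √A := by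
  have hsc : 0 < √c := Real.sqrt_pos.2 hc
  have hsqrt : √(A + a) = a * √c := by
    rw [Real.sqrt_eq_iff_mul_self_eq (by positivity) (by positivity), mul_mul_mul_comm,
      Real.mul_self_sqrt hc.le, ← sq, h, div_mul_cancel₀ _ hc.ne']
  have hmono : √A ≤ √(A + a) := Real.sqrt_le_sqrt (by linarith)
  have hdiff : √(A + a) ^ 2 - √A ^ 2 = a := by
    rw [Real.sq_sqrt (by positivity), Real.sq_sqrt hA]
    ring
  rw [div_le_iff₀ (by positivity)]
  nlinarith [Real.sqrt_nonneg A]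

theorem div_le_sqrt_two_div_sqrt {u w ρ : ℝ} (hρ : 0 < ρ) (h : ρ ≤ 2 * (u ^ 2 / w ^ 2)) :
    w / u ≤ √2 / √ρ := by
  have hsq : (w / u) ^ 2 ≤ 2 / ρ := by
    rcases eq_or_ne u 0 with rfl | hu
    · rw [div_zero, zero_pow two_ne_zero]
      positivity
    rcases eq_or_ne w 0 with rfl | hw
    · rw [zero_div, zero_pow two_ne_zero]
      positivity
    rw [← mul_div_assoc, le_div_iff₀ (by positivity)] at h
    rw [div_pow, div_le_div_iff₀ (by positivity) hρ]
    linarith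
  calc w / u ≤ √(2 / ρ) := (le_abs_self _).trans (Real.abs_le_sqrt hsq)
    _ = √2 / √ρ := Real.sqrt_div' 2 hρ.le

namespace HASD

variable {d : ℕ} {p L : ℝ} {f : EuclideanSpace ℝ (Fin d) → ℝ} {x0 : EuclideanSpace ℝ (Fin d)}
  (h : HASD d p L f x0)

theorem A_nonneg (t : ℕ) : 0 ≤ h.A t := by
  induction t with
  | zero => exact h.A_zero.ge
  | succ t ih => rw [h.A_succ]; linarith [h.a_pos t]

theorem one_div_two_sqrt_le_sqrt_A_succ_sub (hL : 0 < L) (t : ℕ) :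
    1 / (2 * √(18 * L * h.ρ t)) ≤ √(h.A (t + 1)) - √(h.A t) := by
  have hρ := h.ρ_pos t
  rw [h.A_succ]
  exact one_div_two_sqrt_le_sqrt_add_sub_sqrt (h.A_nonneg t) (h.a_pos t) (by positivity) (h.a_eq t)

theorem gradient_ratio_le_sqrt_A_succ_sub (hL : 0 < L) (t : ℕ) :
    1 / (18 * √L) * (pnorm (dualExp p) (gradient f (h.x (t + 1))) /
      pnorm 2 (gradient f (h.x (t + 1)))) ≤ √(h.A (t + 1)) - √(h.A t) := by
  have hρ := h.ρ_pos t
  have hsL : 0 < √L := Real.sqrt_pos.2 hL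
  have hsρ : 0 < √(h.ρ t) := Real.sqrt_pos.2 hρ
  have hs2 : √2 ^ 2 = 2 := Real.sq_sqrt zero_le_two
  have hs18 : √(18 * L * h.ρ t) = 3 * √2 * √L * √(h.ρ t) := by
    rw [Real.sqrt_mul (by positivity), Real.sqrt_mul (by norm_num),
      show (18 : ℝ) = 3 ^ 2 * 2 by norm_num, Real.sqrt_mul (by norm_num),
      Real.sqrt_sq (by norm_num)]
  calc _ ≤ 1 / (18 * √L) * (√2 / √(h.ρ t)) :=
        mul_le_mul_of_nonneg_left (div_le_sqrt_two_div_sqrt hρ (h.ρ_ub t)) (by positivity)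
    _ ≤ 1 / (2 * √(18 * L * h.ρ t)) := by
        rw [hs18, one_div_mul_eq_div, div_div, div_le_div_iff₀ (by positivity) (by positivity)]
        nlinarith [mul_pos hsL hsρ]
    _ ≤ _ := h.one_div_two_sqrt_le_sqrt_A_succ_sub hL t

end HASD

theorem stmt4_general {d : ℕ} (p L : ℝ) (hL : 0 < L)
    (f : EuclideanSpace ℝ (Fin d) → ℝ)
    (x0 : EuclideanSpace ℝ (Fin d)) (h : HASD d p L f x0) :
    ∀ t : ℕ,
      Real.sqrt (h.A t) ≥ (1 / (18 * Real.sqrt L)) * ∑ i ∈ Finset.range t,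
        pnorm (dualExp p) (gradient f (h.x (i + 1))) / pnorm 2 (gradient f (h.x (i + 1))) := by
  intro t
  calc (1 / (18 * √L)) * ∑ i ∈ Finset.range t,
        pnorm (dualExp p) (gradient f (h.x (i + 1))) / pnorm 2 (gradient f (h.x (i + 1)))
      ≤ ∑ i ∈ Finset.range t, (√(h.A (i + 1)) - √(h.A i)) := by
        rw [Finset.mul_sum]
        exact Finset.sum_le_sum fun i _ => h.gradient_ratio_le_sqrt_A_succ_sub hL i
    _ = √(h.A t) := by
        rw [Finset.sum_range_sub (fun i => √(h.A i)), h.A_zero, Real.sqrt_zero, sub_zero]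

theorem stmt4 {d : ℕ} (p L : ℝ) (hp : 2 ≤ p) (hL : 0 < L)
    (f : EuclideanSpace ℝ (Fin d) → ℝ) (hconv : ConvexOn ℝ Set.univ f)
    (hf : Differentiable ℝ f)
    (hsmooth : ∀ x y : EuclideanSpace ℝ (Fin d),
      pnorm (dualExp p) (gradient f y - gradient f x) ≤ L * pnorm p (y - x))
    (x0 : EuclideanSpace ℝ (Fin d)) (h : HASD d p L f x0) :
    ∀ t : ℕ,
      Real.sqrt (h.A t) ≥ (1 / (18 * Real.sqrt L)) * ∑ i ∈ Finset.range t,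
        pnorm (dualExp p) (gradient f (h.x (i + 1))) / pnorm 2 (gradient f (h.x (i + 1))) :=
  stmt4_general p L hL f x0 h
end

section
/- Let L > 0, ρ > 0, A ≥ 0, and let a > 0 satisfy a² = (A + a)/(18 L ρ). Setting A' = A + a, it holds that (A')^{1/2} − A^{1/2} ≥ 1/(9 (L ρ)^{1/2}). -/
theorem stmt5 (L ρ A a : ℝ) (hL : 0 < L) (hρ : 0 < ρ) (hA : 0 ≤ A) (ha : 0 < a)
    (heq : a ^ 2 = (A + a) / (18 * L * ρ)) :
    Real.sqrt (A + a) - Real.sqrt A ≥ 1 / (9 * Real.sqrt (L * ρ)) := by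
  set s := Real.sqrt (A + a) with hsdef
  set t := Real.sqrt A with htdef
  set u := Real.sqrt (L * ρ) with hudef
  have hu : 0 < u := Real.sqrt_pos.2 (by positivity)
  have hs2 : s ^ 2 = A + a := Real.sq_sqrt (by linarith)
  have ht2 : t ^ 2 = A := Real.sq_sqrt hA
  have hu2 : u ^ 2 = L * ρ := Real.sq_sqrt (by positivity)
  have hs0 : 0 < s := Real.sqrt_pos.2 (by linarith)
  have ht0 : 0 ≤ t := Real.sqrt_nonneg _
  have hts : t ≤ s := Real.sqrt_le_sqrt (by linarith)
  have h18 : (18 : ℝ) * L * ρ ≠ 0 := by positivity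
  rw [eq_div_iff h18] at heq
  have key : 18 * u ^ 2 * a ^ 2 = s ^ 2 := by
    rw [hu2, hs2]; linear_combination heq
  have h1 : 0 ≤ s - t := sub_nonneg.2 hts
  have hdiff : (s - t) * (s + t) = a := by linear_combination hs2 - ht2
  have h2 : 2 * s ≤ 9 * u * a := by
    nlinarith [key, mul_pos hu ha, hs0, mul_pos hs0 hs0]
  have h3 : (s - t) * (9 * u) * (2 * s) ≥ 2 * s := by
    calc (s - t) * (9 * u) * (2 * s) ≥ (s - t) * (9 * u) * (s + t) := by
          nlinarith [mul_nonneg h1 hu.le, hts, ht0]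
      _ = 9 * u * a := by linear_combination (9 * u) * hdiff
      _ ≥ 2 * s := h2
  rw [ge_iff_le, div_le_iff₀ (by positivity)]
  nlinarith [h3, hs0]
end

section
/- Let p > 2 be real and let z ∈ ℝ^d have all coordinates nonzero. Then the function φ(z) = ‖z‖_p² is twice differentiable at z, and its Hessian matrix satisfies ∇²φ(z) = 2(p−1)‖z‖_p^{2−p} Diag(|z[1]|^{p−2}, …, |z[d]|^{p−2}) + 2(2−p)‖z‖_p^{2(1−p)} s(z) s(z)ᵀ, where s(z) ∈ ℝ^d is defined by s(z)[i] = |z[i]|^{p−2} z[i]. -/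
open scoped BigOperators
open scoped InnerProductSpace

/-!
Away from the coordinate hyperplanes `‖w‖_p² = S(w) ^ (2/p)` with `S(w) = ∑ i, |w i| ^ p`,
and `t ↦ |t| ^ q` is differentiable at `t ≠ 0` with derivative `q |t| ^ (q-2) t`. By the
chain rule the gradient of `‖·‖_p²` near `z` has coordinates `2 S ^ (2/p - 1) · |w j| ^ (p-2) w j`.
Differentiating this product once more, the factor `S ^ (2/p - 1)` produces the rank-one term
and `|w j| ^ (p-2) w j` the diagonal one; finally `S ^ (r/p) = ‖z‖_p ^ r`.
-/

open Filter Topology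

section OneVariable

variable {q t : ℝ}

theorem hasDerivAt_abs_rpow_of_ne_zero (ht : t ≠ 0) :
    HasDerivAt (fun s : ℝ => |s| ^ q) (q * |t| ^ (q - 2) * t) t := by
  have h := (Real.hasDerivAt_rpow_const (p := q) (Or.inl (abs_ne_zero.2 ht))).comp t
    (hasDerivAt_abs ht)
  refine h.congr_deriv ?_
  have hpow : |t| ^ (q - 1) = |t| ^ (q - 2) * |t| := by
    rw [← Real.rpow_add_one (abs_ne_zero.2 ht)]; ring_nf
  rw [hpow]
  linear_combination (q * |t| ^ (q - 2)) * abs_mul_sign t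

theorem hasDerivAt_abs_rpow_mul_self_of_ne_zero (ht : t ≠ 0) :
    HasDerivAt (fun s : ℝ => |s| ^ q * s) ((q + 1) * |t| ^ q) t := by
  refine ((hasDerivAt_abs_rpow_of_ne_zero ht).mul (hasDerivAt_id t)).congr_deriv ?_
  have hsq : t * t = |t| ^ (2 : ℝ) := by
    rw [Real.rpow_two, sq_abs, sq]
  have hpow : |t| ^ (q - 2) * t * t = |t| ^ q := by
    rw [mul_assoc, hsq, ← Real.rpow_add (abs_pos.2 ht)]; ring_nf
  simp only [id_eq, mul_one]
  linear_combination q * hpow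

end OneVariable

section PowerSum

variable {ι : Type*} [Fintype ι] {p : ℝ}

noncomputable def absPowSum (p : ℝ) (u : EuclideanSpace ℝ ι) : ℝ := ∑ i, |u i| ^ p

theorem eventually_forall_apply_ne_zero {z : EuclideanSpace ℝ ι} (hz : ∀ i, z i ≠ 0) :
    ∀ᶠ w in 𝓝 z, ∀ i, w i ≠ 0 :=
  eventually_all.2 fun i =>
    (EuclideanSpace.proj (𝕜 := ℝ) i).continuous.continuousAt.eventually_ne (hz i)

theorem hasFDerivAt_abs_rpow_apply {q : ℝ} {w : EuclideanSpace ℝ ι} {i : ι} (hw : w i ≠ 0) :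
    HasFDerivAt (fun u : EuclideanSpace ℝ ι => |u i| ^ q)
      ((q * |w i| ^ (q - 2) * w i) • EuclideanSpace.proj (𝕜 := ℝ) i) w :=
  (hasDerivAt_abs_rpow_of_ne_zero hw).comp_hasFDerivAt
    (f := fun u : EuclideanSpace ℝ ι => u i) w (EuclideanSpace.proj (𝕜 := ℝ) i).hasFDerivAt

theorem hasFDerivAt_abs_rpow_mul_self_apply {q : ℝ} {w : EuclideanSpace ℝ ι} {i : ι}
    (hw : w i ≠ 0) :
    HasFDerivAt (fun u : EuclideanSpace ℝ ι => |u i| ^ q * u i)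
      (((q + 1) * |w i| ^ q) • EuclideanSpace.proj (𝕜 := ℝ) i) w :=
  (hasDerivAt_abs_rpow_mul_self_of_ne_zero hw).comp_hasFDerivAt
    (f := fun u : EuclideanSpace ℝ ι => u i) w (EuclideanSpace.proj (𝕜 := ℝ) i).hasFDerivAt

theorem hasFDerivAt_absPowSum {w : EuclideanSpace ℝ ι} (hw : ∀ i, w i ≠ 0) :
    HasFDerivAt (absPowSum p)
      (∑ i, (p * |w i| ^ (p - 2) * w i) • EuclideanSpace.proj (𝕜 := ℝ) i) w :=
  HasFDerivAt.fun_sum fun i _ => hasFDerivAt_abs_rpow_apply (hw i)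

theorem absPowSum_pos [Nonempty ι] {w : EuclideanSpace ℝ ι} (hw : ∀ i, w i ≠ 0) :
    0 < absPowSum p w :=
  Finset.sum_pos (fun i _ => Real.rpow_pos_of_pos (abs_pos.2 (hw i)) p) Finset.univ_nonempty

theorem hasFDerivAt_absPowSum_rpow [Nonempty ι] (r : ℝ) {w : EuclideanSpace ℝ ι}
    (hw : ∀ i, w i ≠ 0) :
    HasFDerivAt (fun u => absPowSum p u ^ r)
      ((r * absPowSum p w ^ (r - 1)) •
        ∑ i, (p * |w i| ^ (p - 2) * w i) • EuclideanSpace.proj (𝕜 := ℝ) i) w :=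
  (Real.hasDerivAt_rpow_const (Or.inl (absPowSum_pos hw).ne')).comp_hasFDerivAt w
    (hasFDerivAt_absPowSum hw)

noncomputable def gradPNormSq (p : ℝ) (w : EuclideanSpace ℝ ι) :
    EuclideanSpace ℝ ι →L[ℝ] ℝ :=
  ∑ j, (2 * absPowSum p w ^ (2 / p - 1) * (|w j| ^ (p - 2) * w j)) •
    EuclideanSpace.proj (𝕜 := ℝ) j

theorem hasFDerivAt_absPowSum_rpow_two_div [Nonempty ι] (hp : p ≠ 0)
    {w : EuclideanSpace ℝ ι} (hw : ∀ i, w i ≠ 0) :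
    HasFDerivAt (fun u => absPowSum p u ^ (2 / p)) (gradPNormSq p w) w := by
  refine (hasFDerivAt_absPowSum_rpow (2 / p) hw).congr_fderiv ?_
  rw [gradPNormSq, Finset.smul_sum]
  refine Finset.sum_congr rfl fun j _ => ?_
  rw [smul_smul]
  congr 1
  field_simp

theorem differentiableAt_gradPNormSq [Nonempty ι] {z : EuclideanSpace ℝ ι}
    (hz : ∀ i, z i ≠ 0) : DifferentiableAt ℝ (gradPNormSq p) z :=
  DifferentiableAt.fun_sum fun j _ =>
    ((((hasFDerivAt_absPowSum_rpow _ hz).differentiableAt.const_mul 2).mul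
      (hasFDerivAt_abs_rpow_mul_self_apply (hz j)).differentiableAt)).smul_const _

variable [DecidableEq ι]

theorem gradPNormSq_apply_single (w : EuclideanSpace ℝ ι) (j : ι) :
    gradPNormSq p w (EuclideanSpace.single j 1) =
      2 * absPowSum p w ^ (2 / p - 1) * (|w j| ^ (p - 2) * w j) := by
  simp [gradPNormSq, PiLp.single_apply]

theorem fderiv_gradPNormSq_apply_single [Nonempty ι] (hp : p ≠ 0) {z : EuclideanSpace ℝ ι}
    (hz : ∀ i, z i ≠ 0) (i j : ι) :
    fderiv ℝ (fun w => gradPNormSq p w (EuclideanSpace.single j 1)) z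
        (EuclideanSpace.single i 1) =
      2 * (p - 1) * absPowSum p z ^ (2 / p - 1) * (if i = j then |z i| ^ (p - 2) else 0) +
        2 * (2 - p) * absPowSum p z ^ (2 / p - 2) *
          (|z i| ^ (p - 2) * z i) * (|z j| ^ (p - 2) * z j) := by
  simp_rw [gradPNormSq_apply_single]
  have hcoef := (hasFDerivAt_absPowSum_rpow (p := p) (2 / p - 1) hz).const_mul 2
  rw [(hcoef.fun_mul (hasFDerivAt_abs_rpow_mul_self_apply (q := p - 2) (hz j))).fderiv]
  simp only [add_apply, smul_apply, FunLike.coe_sum, Finset.sum_apply, PiLp.proj_apply,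
    Finset.mem_univ, if_true, PiLp.single_apply, smul_eq_mul, mul_ite, mul_one, mul_zero,
    Finset.sum_ite_eq']
  rw [show 2 / p - 1 - 1 = 2 / p - 2 by ring]
  by_cases hij : i = j
  · subst hij
    simp only [if_true]
    field_simp
    ring
  · simp only [hij, Ne.symm hij, if_false]
    field_simp

end PowerSum

theorem pnorm_rpow (p r : ℝ) {d : ℕ} (u : EuclideanSpace ℝ (Fin d)) :
    pnorm p u ^ r = absPowSum p u ^ (r / p) := by
  rw [pnorm, ← Real.rpow_mul (Finset.sum_nonneg fun i _ => by positivity), one_div_mul_eq_div]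
  rfl

theorem pnorm_sq (p : ℝ) {d : ℕ} (u : EuclideanSpace ℝ (Fin d)) :
    pnorm p u ^ 2 = absPowSum p u ^ (2 / p) := by
  rw [← pnorm_rpow, Real.rpow_two]

theorem stmt16 {d : ℕ} (p : ℝ) (hp : 2 < p)
    (z : EuclideanSpace ℝ (Fin d)) (hz : ∀ i, z i ≠ 0) :
    (∀ᶠ w in nhds z, DifferentiableAt ℝ (fun w : EuclideanSpace ℝ (Fin d) => pnorm p w ^ 2) w) ∧
    DifferentiableAt ℝ
      (fun w : EuclideanSpace ℝ (Fin d) =>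
        fderiv ℝ (fun u : EuclideanSpace ℝ (Fin d) => pnorm p u ^ 2) w) z ∧
    ∀ i j : Fin d,
      fderiv ℝ (fun w : EuclideanSpace ℝ (Fin d) =>
          fderiv ℝ (fun u : EuclideanSpace ℝ (Fin d) => pnorm p u ^ 2) w
            (EuclideanSpace.single j 1)) z (EuclideanSpace.single i 1) =
        2 * (p - 1) * pnorm p z ^ (2 - p) * (if i = j then |z i| ^ (p - 2) else 0) +
        2 * (2 - p) * pnorm p z ^ (2 * (1 - p)) *
          (|z i| ^ (p - 2) * z i) * (|z j| ^ (p - 2) * z j) := by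
  rcases isEmpty_or_nonempty (Fin d) with hd | hd
  · exact ⟨.of_forall fun w => differentiable_of_subsingleton w,
      differentiable_of_subsingleton z, fun i => isEmptyElim i⟩
  have hp0 : p ≠ 0 := by positivity
  have hnear := eventually_forall_apply_ne_zero hz
  have hgrad : fderiv ℝ (fun u => absPowSum p u ^ (2 / p)) =ᶠ[𝓝 z] gradPNormSq p :=
    hnear.mono fun w hw => (hasFDerivAt_absPowSum_rpow_two_div hp0 hw).fderiv
  simp only [pnorm_sq]
  refine ⟨hnear.mono fun w hw => (hasFDerivAt_absPowSum_rpow_two_div hp0 hw).differentiableAt,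
    hgrad.differentiableAt_iff.2 (differentiableAt_gradPNormSq hz), fun i j => ?_⟩
  have hgrad_j : (fun w => fderiv ℝ (fun u => absPowSum p u ^ (2 / p)) w
      (EuclideanSpace.single j 1)) =ᶠ[𝓝 z]
        fun w => gradPNormSq p w (EuclideanSpace.single j 1) :=
    hgrad.mono fun w hw => congrArg (fun L => L (EuclideanSpace.single j 1)) hw
  rw [hgrad_j.fderiv_eq, fderiv_gradPNormSq_apply_single hp0 hz, pnorm_rpow, pnorm_rpow,
    show (2 - p) / p = 2 / p - 1 by field_simp, show 2 * (1 - p) / p = 2 / p - 2 by field_simp]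
end

section
/- Let ω > 0 and let ζ : [0,1] → ℝ be differentiable with ζ(θ) > 0 for all θ ∈ [0,1], and suppose that for all θ ∈ [0,1], |ζ'(θ)/ζ(θ)| ≤ ω(1 + 1/ζ(θ) + ζ(θ)). Suppose θ* ∈ [0,1] satisfies ζ(θ*) = 5/4. Then every θ̃ ∈ [0,1] with |θ̃ − θ*| ≤ 1/(10ω) satisfies 1/2 ≤ ζ(θ̃) ≤ 2. -/
/-!
Where `1/2 ≤ ζ ≤ 2`, the hypothesis gives `|ζ'| ≤ ω (ζ + 1 + ζ²) ≤ 7ω`. Fencing `ζ - ζ θ*` by the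
linear barrier `(15/2) ω |θ - θ*|`, which stays below `3/4` over the distance `1/(10ω)`, shows that
`ζ` never leaves `[5/4 - 3/4, 5/4 + 3/4]`.
-/

open Set

section Fencing

variable {E : Type*} [NormedAddCommGroup E] [NormedSpace ℝ E] {f f' : ℝ → E} {a b x M r : ℝ}

theorem norm_sub_le_mul_of_norm_deriv_lt_while_close
    (hf : ∀ y ∈ Icc a b, HasDerivAt f (f' y) y)
    (hbound : ∀ y ∈ Icc a b, ‖f y - f a‖ ≤ r → ‖f' y‖ < M) (hM : 0 ≤ M) (hr : M * (b - a) ≤ r) :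
    ∀ y ∈ Icc a b, ‖f y - f a‖ ≤ M * (y - a) := by
  refine image_norm_le_of_norm_deriv_right_lt_deriv_boundary
    (f := fun y => f y - f a) (B := fun y => M * (y - a)) (B' := fun _ => M)
    (fun y hy => ((hf y hy).sub_const (f a)).continuousAt.continuousWithinAt)
    (fun y hy => ((hf y (Ico_subset_Icc_self hy)).sub_const (f a)).hasDerivWithinAt)
    (by simp) (fun y => by simpa using ((hasDerivAt_id y).sub_const a).const_mul M) ?_
  intro y hy hy_eq
  exact hbound y (Ico_subset_Icc_self hy) (hy_eq.le.trans (by nlinarith [hy.2]))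

theorem norm_sub_le_of_norm_deriv_lt_while_close
    (hf : ∀ y ∈ uIcc a x, HasDerivAt f (f' y) y)
    (hbound : ∀ y ∈ uIcc a x, ‖f y - f a‖ ≤ r → ‖f' y‖ < M) (hM : 0 ≤ M) (hr : M * |x - a| ≤ r) :
    ‖f x - f a‖ ≤ r := by
  rcases le_total a x with hax | hxa
  · rw [uIcc_of_le hax] at hf hbound
    rw [abs_of_nonneg (sub_nonneg.2 hax)] at hr
    exact (norm_sub_le_mul_of_norm_deriv_lt_while_close hf hbound hM hr x ⟨hax, le_rfl⟩).trans hr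
  · have hneg : ∀ y ∈ Icc (-a) (-x), -y ∈ uIcc a x := fun y hy => by
      rw [uIcc_of_ge hxa]; exact ⟨by linarith [hy.2], by linarith [hy.1]⟩
    have hf_neg : ∀ y ∈ Icc (-a) (-x), HasDerivAt (fun y => f (-y)) (-f' (-y)) y := fun y hy => by
      simpa [Function.comp_def] using (hf (-y) (hneg y hy)).scomp y (hasDerivAt_neg y)
    have hr_neg : M * (-x - -a) ≤ r := by
      rwa [neg_sub_neg, ← abs_of_nonneg (sub_nonneg.2 hxa), abs_sub_comm]
    have := norm_sub_le_mul_of_norm_deriv_lt_while_close hf_neg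
      (fun y hy hclose => by simpa using hbound (-y) (hneg y hy) (by simpa using hclose)) hM
      hr_neg (-x) ⟨neg_le_neg hxa, le_rfl⟩
    simp only [neg_neg] at this
    exact this.trans hr_neg

end Fencing

theorem abs_le_of_abs_div_le {ω z z' : ℝ} (hz : 0 < z) (h : |z' / z| ≤ ω * (1 + 1 / z + z)) :
    |z'| ≤ ω * (z + 1 + z ^ 2) :=
  calc |z'| = |z' / z| * z := by rw [abs_div, abs_of_pos hz, div_mul_cancel₀ _ hz.ne']
    _ ≤ ω * (1 + 1 / z + z) * z := mul_le_mul_of_nonneg_right h hz.le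
    _ = ω * (z + 1 + z ^ 2) := by field_simp

theorem stmt19 (ω : ℝ) (hω : 0 < ω) (ζ ζ' : ℝ → ℝ)
    (hdiff : ∀ θ ∈ Set.Icc (0 : ℝ) 1, HasDerivAt ζ (ζ' θ) θ)
    (hpos : ∀ θ ∈ Set.Icc (0 : ℝ) 1, 0 < ζ θ)
    (hlip : ∀ θ ∈ Set.Icc (0 : ℝ) 1,
      |ζ' θ / ζ θ| ≤ ω * (1 + 1 / ζ θ + ζ θ))
    (θstar : ℝ) (hθstar : θstar ∈ Set.Icc (0 : ℝ) 1) (hval : ζ θstar = 5 / 4) :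
    ∀ θ ∈ Set.Icc (0 : ℝ) 1, |θ - θstar| ≤ 1 / (10 * ω) →
      1 / 2 ≤ ζ θ ∧ ζ θ ≤ 2 := by
  intro θ hθ hclose
  have hsub : uIcc θstar θ ⊆ Icc 0 1 := uIcc_subset_Icc hθstar hθ
  have hζ : ‖ζ θ - ζ θstar‖ ≤ 3 / 4 := by
    refine norm_sub_le_of_norm_deriv_lt_while_close (M := 15 / 2 * ω)
      (fun y hy => hdiff y (hsub hy)) ?_ (by positivity) ?_
    · intro y hy hy_close
      rw [Real.norm_eq_abs, hval, abs_le] at hy_close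
      have hderiv := abs_le_of_abs_div_le (hpos y (hsub hy)) (hlip y (hsub hy))
      rw [Real.norm_eq_abs]
      nlinarith [mul_nonneg hω.le (mul_nonneg (by linarith : 0 ≤ 2 - ζ y) (by linarith : 0 ≤ ζ y + 3))]
    · calc 15 / 2 * ω * |θ - θstar| ≤ 15 / 2 * ω * (1 / (10 * ω)) := by gcongr
        _ = 3 / 4 := by field_simp; norm_num
  rw [Real.norm_eq_abs, hval, abs_le] at hζ
  constructor <;> linarith
end
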